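/- If m is a positive integer not of the form 2^l − 1, and C = A ∩ [0, m], D = B ∩ [0, m], then there exists a positive integer n with m < n < 2m such that R_C(n) ≠ R_D(n). -/
import Mathlib


/-- `R S n` is the number of unordered representations of `n` as `s + s'`
with `s, s' ∈ S` and `s < s'`. -/
noncomputable def R (S : Set ℕ) (n : ℕ) : ℕ :=
  {p : ℕ × ℕ | p.1 ∈ S ∧ p.2 ∈ S ∧ p.1 < p.2 ∧ p.1 + p.2 = n}.ncard

/-- The Thue–Morse set: nonnegative integers with an even number of
`1` digits in binary. -/
def A : Set ℕ := {n | Even ((Nat.digits 2 n).sum)}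

/-- The complement of the Thue–Morse set. -/
def B : Set ℕ := Aᶜ

instance : DecidablePred (· ∈ A) := fun n => inferInstanceAs (Decidable (Even _))
instance (m : ℕ) : DecidablePred (· ∈ A ∩ Set.Iic m) :=
  fun n => inferInstanceAs (Decidable (n ∈ A ∧ n ≤ m))
instance : DecidablePred (· ∈ B) := fun n => inferInstanceAs (Decidable (¬ n ∈ A))
instance (m : ℕ) : DecidablePred (· ∈ B ∩ Set.Iic m) :=
  fun n => inferInstanceAs (Decidable (n ∈ B ∧ n ≤ m))

lemma A_zero : 0 ∈ A := by simp [A]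

lemma A_two_mul (k : ℕ) : 2 * k ∈ A ↔ k ∈ A := by
  rcases Nat.eq_zero_or_pos k with rfl | hk
  · simp
  · have hd : Nat.digits 2 (2 * k) = 0 :: Nat.digits 2 k := by
      rw [Nat.digits_def' (by norm_num : 1 < 2) (by positivity)]
      congr 1
      · omega
      · congr 1; omega
    simp [A, hd]

lemma A_two_mul_add_one (k : ℕ) : 2 * k + 1 ∈ A ↔ ¬ k ∈ A := by
  have hd : Nat.digits 2 (2 * k + 1) = 1 :: Nat.digits 2 k := by
    rw [Nat.digits_def' (by norm_num : 1 < 2) (by omega)]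
    congr 1
    · omega
    · congr 1; omega
  simp only [A, Set.mem_setOf_eq, hd, List.sum_cons]
  rw [add_comm, Nat.even_add_one]

def t (n : ℕ) : ℤ := if n ∈ A then 1 else -1

lemma t_zero : t 0 = 1 := by simp [t, A_zero]
lemma t_two_mul (k : ℕ) : t (2 * k) = t k := by
  simp only [t, A_two_mul]
lemma t_two_mul_add_one (k : ℕ) : t (2 * k + 1) = - t k := by
  by_cases h : k ∈ A <;> simp [t, A_two_mul_add_one, h]
lemma t_one : t 1 = -1 := by
  have := t_two_mul_add_one 0
  simpa [t_zero] using this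


lemma R_eq (S : Set ℕ) [DecidablePred (· ∈ S)] (n : ℕ) :
    R S n = ((Finset.range n).filter
      (fun s => s ∈ S ∧ (n - s) ∈ S ∧ s + s < n)).card := by
  have himg : {p : ℕ × ℕ | p.1 ∈ S ∧ p.2 ∈ S ∧ p.1 < p.2 ∧ p.1 + p.2 = n}
      = ↑(((Finset.range n).filter (fun s => s ∈ S ∧ (n - s) ∈ S ∧ s + s < n)).image
          (fun s => (s, n - s))) := by
    ext ⟨a, b⟩
    simp only [Set.mem_setOf_eq, Finset.coe_image, Set.mem_image, Finset.mem_coe,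
      Finset.mem_filter, Finset.mem_range, Prod.mk.injEq]
    constructor
    · rintro ⟨ha, hb, hab, hsum⟩
      refine ⟨a, ⟨by omega, ha, ?_, by omega⟩, rfl, by omega⟩
      rwa [show n - a = b by omega]
    · rintro ⟨s, ⟨hs, h1, h2, h3⟩, rfl, rfl⟩
      exact ⟨h1, h2, by omega, by omega⟩
  rw [R, himg, Set.ncard_coe_finset, Finset.card_image_of_injective]
  intro a b h
  simpa using congrArg Prod.fst h

lemma key (m n : ℕ) (h1 : m < n) (h2 : n < 2 * m) :
    2 * ((R (A ∩ Set.Iic m) n : ℤ) - (R (B ∩ Set.Iic m) n : ℤ))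
      = ∑ s ∈ (Finset.Icc (n - m) m).filter (fun s => s + s ≠ n), t s := by
  set K := (Finset.Icc (n - m) m).filter (fun s => s + s ≠ n) with hK
  set I := K.filter (fun s => s + s < n) with hI
  have hRA : R (A ∩ Set.Iic m) n
      = (I.filter (fun s => s ∈ A ∧ (n - s) ∈ A)).card := by
    rw [R_eq]
    congr 1
    ext s
    simp only [hI, hK, Finset.mem_filter, Finset.mem_range, Finset.mem_Icc,
      Set.mem_inter_iff, Set.mem_Iic]
    by_cases hA1 : s ∈ A <;> by_cases hA2 : (n - s) ∈ A <;>
      simp only [hA1, hA2, true_and, false_and, and_true, and_false,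
        not_true, not_false_iff] <;> omega
  have hRB : R (B ∩ Set.Iic m) n
      = (I.filter (fun s => ¬ s ∈ A ∧ ¬ (n - s) ∈ A)).card := by
    rw [R_eq]
    congr 1
    ext s
    simp only [hI, hK, Finset.mem_filter, Finset.mem_range, Finset.mem_Icc,
      Set.mem_inter_iff, Set.mem_Iic, B, Set.mem_compl_iff]
    by_cases hA1 : s ∈ A <;> by_cases hA2 : (n - s) ∈ A <;>
      simp only [hA1, hA2, true_and, false_and, and_true, and_false,
        not_true, not_false_iff] <;> omega
  -- sum over K splits as I and its complement J
  have hsplit : ∑ s ∈ I, t s + ∑ s ∈ K.filter (fun s => ¬ s + s < n), t s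
      = ∑ s ∈ K, t s := Finset.sum_filter_add_sum_filter_not K _ t
  -- reflection: ∑ over I of t (n - s) equals ∑ over J of t s
  have hrefl : ∑ s ∈ I, t (n - s) = ∑ s ∈ K.filter (fun s => ¬ s + s < n), t s := by
    apply Finset.sum_nbij' (i := fun s => n - s) (j := fun s => n - s)
    · intro a ha
      simp only [hI, hK, Finset.mem_filter, Finset.mem_Icc] at ha ⊢
      omega
    · intro a ha
      simp only [hI, hK, Finset.mem_filter, Finset.mem_Icc] at ha ⊢
      omega
    · intro a ha
      simp only [hI, hK, Finset.mem_filter, Finset.mem_Icc] at ha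
      omega
    · intro a ha
      simp only [hI, hK, Finset.mem_filter, Finset.mem_Icc] at ha
      omega
    · intro a ha; rfl
  have hpoint : ∀ s ∈ I,
      2 * ((if s ∈ A ∧ (n - s) ∈ A then (1:ℤ) else 0)
        - (if (¬ s ∈ A) ∧ ¬ (n - s) ∈ A then (1:ℤ) else 0)) = t s + t (n - s) := by
    intro s _
    by_cases hs : s ∈ A <;> by_cases hns : (n - s) ∈ A <;> simp [t, hs, hns] <;> ring
  calc 2 * ((R (A ∩ Set.Iic m) n : ℤ) - (R (B ∩ Set.Iic m) n : ℤ))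
      = ∑ s ∈ I, 2 * ((if s ∈ A ∧ (n - s) ∈ A then (1:ℤ) else 0)
          - (if (¬ s ∈ A) ∧ ¬ (n - s) ∈ A then (1:ℤ) else 0)) := by
        rw [hRA, hRB, Finset.card_filter, Finset.card_filter]
        push_cast
        rw [← Finset.mul_sum, Finset.sum_sub_distrib]
    _ = ∑ s ∈ I, (t s + t (n - s)) := Finset.sum_congr rfl hpoint
    _ = ∑ s ∈ I, t s + ∑ s ∈ I, t (n - s) := Finset.sum_add_distrib
    _ = ∑ s ∈ K, t s := by rw [hrefl, hsplit]

lemma Gval (m n : ℕ) (h1 : m < n) (h2 : n < 2 * m)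
    (heq : R (A ∩ Set.Iic m) n = R (B ∩ Set.Iic m) n) :
    ∑ s ∈ Finset.Icc (n - m) m, t s = if 2 ∣ n then t (n / 2) else 0 := by
  have hk := key m n h1 h2
  rw [heq, sub_self, mul_zero] at hk
  by_cases hpar : 2 ∣ n
  · obtain ⟨c, rfl⟩ := hpar
    have hsplit := Finset.sum_filter_add_sum_filter_not
      (Finset.Icc (2 * c - m) m) (fun s => s + s ≠ 2 * c) t
    have hfc : (Finset.Icc (2 * c - m) m).filter (fun s => ¬ s + s ≠ 2 * c) = {c} := by
      ext s
      simp only [Finset.mem_filter, Finset.mem_Icc, Finset.mem_singleton, not_not]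
      omega
    rw [hfc, ← hk, Finset.sum_singleton] at hsplit
    rw [if_pos (dvd_mul_right 2 c), show 2 * c / 2 = c by omega, ← hsplit, zero_add]
  · have hfilt : (Finset.Icc (n - m) m).filter (fun s => s + s ≠ n)
        = Finset.Icc (n - m) m :=
      Finset.filter_true_of_mem (fun s _ => by omega)
    rw [if_neg hpar, ← hfilt]
    exact hk.symm

lemma step (m n : ℕ) (h1 : m < n) (h2 : n + 1 < 2 * m)
    (heq : ∀ k, m < k → k < 2 * m → R (A ∩ Set.Iic m) k = R (B ∩ Set.Iic m) k) :
    t (n - m) = (if 2 ∣ n then t (n / 2) else 0)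
      - (if 2 ∣ (n + 1) then t ((n + 1) / 2) else 0) := by
  have g1 := Gval m n h1 (by omega) (heq n h1 (by omega))
  have g2 := Gval m (n + 1) (by omega) h2 (heq (n + 1) (by omega) h2)
  have hins : Finset.Icc (n - m) m = insert (n - m) (Finset.Icc (n + 1 - m) m) := by
    ext s
    simp only [Finset.mem_Icc, Finset.mem_insert]
    omega
  have hnot : (n - m) ∉ Finset.Icc (n + 1 - m) m := by
    simp only [Finset.mem_Icc]
    omega
  rw [hins, Finset.sum_insert hnot, g2] at g1
  linarith [g1]

lemma TM : ∀ N, 2 ≤ N → (∀ r, r + 2 ≤ N → t (r + N) = - t r) → ∃ j, N = 2 ^ j := by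
  intro N
  induction N using Nat.strong_induction_on with
  | _ N ih =>
    intro hN h
    rcases Nat.even_or_odd N with ⟨M, rfl⟩ | ⟨M, rfl⟩
    · rcases Nat.lt_or_ge M 2 with hM | hM
      · have : M = 1 := by omega
        subst this
        exact ⟨1, by norm_num⟩
      · have h' : ∀ k, k + 2 ≤ M → t (k + M) = - t k := by
          intro k hk
          have hh := h (2 * k) (by omega)
          rw [show 2 * k + (M + M) = 2 * (k + M) by ring, t_two_mul, t_two_mul] at hh
          exact hh
        obtain ⟨j, hj⟩ := ih M (by omega) hM h'
        exact ⟨j + 1, by rw [hj, pow_succ]; ring⟩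
    · exfalso
      have hM : 1 ≤ M := by omega
      have rel1 : ∀ k, k + 1 ≤ M → t (k + M) = t k := by
        intro k hk
        have hh := h (2 * k) (by omega)
        rw [show 2 * k + (2 * M + 1) = 2 * (k + M) + 1 by ring,
          t_two_mul_add_one, t_two_mul] at hh
        linarith
      have rel2 : ∀ k, k + 1 ≤ M → t (k + M + 1) = t k := by
        intro k hk
        have hh := h (2 * k + 1) (by omega)
        rw [show 2 * k + 1 + (2 * M + 1) = 2 * (k + M + 1) by ring,
          t_two_mul, t_two_mul_add_one] at hh
        linarith
      rcases Nat.lt_or_ge M 2 with hM2 | hM2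
      · have hMe : M = 1 := by omega
        have := rel1 0 (by omega)
        rw [hMe, zero_add, t_zero, t_one] at this
        norm_num at this
      · have e1 := rel1 1 (by omega)
        have e2 := rel2 0 (by omega)
        rw [zero_add] at e2
        rw [add_comm 1 M] at e1
        rw [e1, t_zero, t_one] at e2
        norm_num at e2


theorem exists_ne_of_not_pow_sub_one (m : ℕ) (hm : 0 < m)
    (hnot : ¬ ∃ l : ℕ, m = 2 ^ l - 1) :
    ∃ n : ℕ, m < n ∧ n < 2 * m ∧
      R (A ∩ Set.Iic m) n ≠ R (B ∩ Set.Iic m) n := by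
  by_contra hcon
  push_neg at hcon
  rcases Nat.even_or_odd m with ⟨m', rfl⟩ | ⟨m', rfl⟩
  · -- m = m' + m' even
    rcases Nat.lt_or_ge m' 2 with hsm | hsm
    · -- m' = 1, m = 2 : contradiction at n = 3
      have hm1 : m' = 1 := by omega
      subst hm1
      have g := Gval 2 3 (by norm_num) (by norm_num)
        (hcon 3 (by norm_num) (by norm_num))
      rw [if_neg (by omega)] at g
      have hset : Finset.Icc (3 - 2) 2 = {1, 2} := rfl
      rw [hset, Finset.sum_insert (by decide), Finset.sum_singleton] at g
      have h2 : t 2 = t 1 := by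
        have := t_two_mul 1
        simpa using this
      rw [h2, t_one] at g
      norm_num at g
    · -- m' ≥ 2
      have e1 := step (m' + m') (m' + m' + 1) (by omega) (by omega) hcon
      have e2 := step (m' + m') (m' + m' + 2) (by omega) (by omega) hcon
      rw [show m' + m' + 1 - (m' + m') = 1 by omega, if_neg (by omega),
        if_pos (by omega), show (m' + m' + 1 + 1) / 2 = m' + 1 by omega] at e1
      rw [show m' + m' + 2 - (m' + m') = 2 by omega, if_pos (by omega),
        if_neg (by omega), show (m' + m' + 2) / 2 = m' + 1 by omega] at e2
      have h2 : t 2 = t 1 := by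
        have := t_two_mul 1
        simpa using this
      rw [h2] at e2
      rw [t_one] at e1 e2
      linarith
  · -- m = 2 * m' + 1 odd
    rcases Nat.eq_zero_or_pos m' with rfl | hm'
    · exact hnot ⟨1, by norm_num⟩
    · have hyp : ∀ r, r + 2 ≤ m' + 1 → t (r + (m' + 1)) = - t r := by
        intro r hr
        have e := step (2 * m' + 1) (2 * r + 2 * m' + 2) (by omega) (by omega) hcon
        rw [show 2 * r + 2 * m' + 2 - (2 * m' + 1) = 2 * r + 1 by omega,
          if_pos (by omega), if_neg (by omega),
          show (2 * r + 2 * m' + 2) / 2 = r + (m' + 1) by omega,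
          t_two_mul_add_one] at e
        linarith
      obtain ⟨j, hj⟩ := TM (m' + 1) (by omega) hyp
      refine hnot ⟨j + 1, ?_⟩
      have hp : (2:ℕ) ^ (j + 1) = 2 ^ j * 2 := pow_succ 2 j
      omega
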